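/- Let ℓ : (0,∞) → ℝ satisfy λ₁^{−1}ℓ(λ₁) ≥ (λ₂ − λ₁) + λ₂^{−1}ℓ(λ₂) for all 0 < λ₁ < λ₂. Then ℓ has at most one zero in (0,∞); moreover, if E > 0 satisfies ℓ(E) = 0, then |ℓ(λ)| ≥ λ|E − λ| for all λ > 0. -/
import Mathlib


/-- If `ℓ : (0,∞) → ℝ` satisfies `λ₁⁻¹ℓ(λ₁) ≥ (λ₂ − λ₁) + λ₂⁻¹ℓ(λ₂)` whenever
`0 < λ₁ < λ₂`, then `ℓ` has at most one zero in `(0,∞)`, and if `E > 0` is a zero of `ℓ`,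
then `|ℓ(λ)| ≥ λ|E − λ|` for all `λ > 0`. -/
theorem unique_zero_and_quantitative_bound
    (ℓ : ℝ → ℝ)
    (hineq : ∀ l₁ l₂ : ℝ, 0 < l₁ → l₁ < l₂ → l₁⁻¹ * ℓ l₁ ≥ (l₂ - l₁) + l₂⁻¹ * ℓ l₂) :
    (∀ E₁ E₂ : ℝ, 0 < E₁ → 0 < E₂ → ℓ E₁ = 0 → ℓ E₂ = 0 → E₁ = E₂) ∧
    (∀ E : ℝ, 0 < E → ℓ E = 0 → ∀ l : ℝ, 0 < l → l * |E - l| ≤ |ℓ l|) := by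
  -- below a zero: ℓ l ≥ l (E - l)
  have below : ∀ E : ℝ, 0 < E → ℓ E = 0 → ∀ l : ℝ, 0 < l → l < E →
      l * (E - l) ≤ ℓ l := by
    intro E hE hz l hl hlE
    have h := hineq l E hl hlE
    rw [hz, mul_zero, add_zero] at h
    have h' : E - l ≤ l⁻¹ * ℓ l := by linarith
    have := (le_inv_mul_iff₀ hl).mp h'
    linarith
  -- above a zero: ℓ l ≤ - l (l - E)
  have above : ∀ E : ℝ, 0 < E → ℓ E = 0 → ∀ l : ℝ, E < l →
      ℓ l ≤ -(l * (l - E)) := by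
    intro E hE hz l hEl
    have h := hineq E l hE hEl
    rw [hz, mul_zero] at h
    have h' : l⁻¹ * ℓ l ≤ -(l - E) := by linarith
    have := (inv_mul_le_iff₀ (hE.trans hEl)).mp h'
    linarith [this]
  constructor
  · intro E₁ E₂ h₁ h₂ hz₁ hz₂
    by_contra hne
    rcases lt_or_gt_of_ne hne with h | h
    · have := below E₂ h₂ hz₂ E₁ h₁ h
      nlinarith
    · have := below E₁ h₁ hz₁ E₂ h₂ h
      nlinarith
  · intro E hE hz l hl
    rcases lt_trichotomy l E with h | h | h
    · have hb := below E hE hz l hl h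
      rw [abs_of_pos (by linarith), abs_of_pos (by nlinarith)]
      exact hb
    · simp [h, hz]
    · have ha := above E hE hz l h
      rw [abs_of_neg (by linarith), abs_of_neg (by nlinarith)]
      nlinarith
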